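/- (Interpolant combination lemma, left-empty case) With notation as before, suppose neither l nor l* occurs in the antecedent side, i.e., m = o = 0. If I_1 and I_2 satisfy ⋀E_1 → I_1, I_1 → ⋁{C_1,...,C_p} ∨ ⋁E_2, ⋀E_1 → I_2, and I_2 → ⋁{D_1,...,D_r} ∨ ⋁E_2 (all valid), then I = I_1 ∧ I_2 satisfies: ⋀E_1 → I is valid and I → (C_1∧l*) ∨...∨ (C_p∧l*) ∨ (D_1∧l) ∨...∨ (D_r∧l) ∨ ⋁E_2 is valid. -/

import Mathlib

/-- Propositional formulas over variables indexed by naturals. -/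
inductive PropForm where
  | var : Nat → PropForm
  | fls : PropForm
  | tru : PropForm
  | neg : PropForm → PropForm
  | conj : PropForm → PropForm → PropForm
  | disj : PropForm → PropForm → PropForm
deriving DecidableEq

/-- Classical Boolean evaluation of a formula under a valuation. -/
def PropForm.eval (v : Nat → Bool) : PropForm → Bool
  | .var n => v n
  | .fls => false
  | .tru => true
  | .neg A => !(A.eval v)
  | .conj A B => A.eval v && B.eval v
  | .disj A B => A.eval v || B.eval v

/-- The propositional variables occurring in a formula. -/
def PropForm.vars : PropForm → Finset Nat
  | .var n => {n}
  | .fls => ∅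
  | .tru => ∅
  | .neg A => A.vars
  | .conj A B => A.vars ∪ B.vars
  | .disj A B => A.vars ∪ B.vars

/-- A formula is valid iff true under every valuation. -/
def PropForm.Valid (A : PropForm) : Prop := ∀ v : Nat → Bool, A.eval v = true

/-- Literals: a variable or its negation. -/
inductive Lit where
  | pos : Nat → Lit
  | neg : Nat → Lit
deriving DecidableEq

/-- The complement of a literal. -/
def Lit.compl : Lit → Lit
  | .pos n => .neg n
  | .neg n => .pos n

/-- The variable of a literal. -/
def Lit.var : Lit → Nat
  | .pos n => n
  | .neg n => n

/-- Evaluation of a literal. -/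
def Lit.eval (v : Nat → Bool) : Lit → Bool
  | .pos n => v n
  | .neg n => !(v n)

/-- A literal as a formula. -/
def Lit.toForm : Lit → PropForm
  | .pos n => .var n
  | .neg n => .neg (.var n)

/-- A clause (finite set of literals read disjunctively) is satisfied by `v`. -/
def clauseSat (v : Nat → Bool) (C : Finset Lit) : Prop := ∃ l ∈ C, l.eval v = true

/-- A conjunction of literals (finite set read conjunctively) is satisfied by `v`. -/
def cubeSat (v : Nat → Bool) (C : Finset Lit) : Prop := ∀ l ∈ C, l.eval v = true

theorem Lit.eval_compl (v : Nat → Bool) (l : Lit) : l.compl.eval v = !l.eval v := by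
  cases l <;> simp [Lit.compl, Lit.eval]

theorem cubeSat_insert_iff {v : Nat → Bool} {l : Lit} {C : Finset Lit} :
    cubeSat v (insert l C) ↔ l.eval v = true ∧ cubeSat v C :=
  Finset.forall_mem_insert _ _ _

theorem exists_cubeSat_insert {v : Nat → Bool} {l : Lit} {Cs : List (Finset Lit)}
    (hl : l.eval v = true) (h : ∃ C ∈ Cs, cubeSat v C) :
    ∃ C ∈ Cs, cubeSat v (insert l C) :=
  let ⟨C, hC, hsat⟩ := h
  ⟨C, hC, cubeSat_insert_iff.2 ⟨hl, hsat⟩⟩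

theorem stmt5_general (l : Lit) (Cs Ds : List (Finset Lit))
    (E₁ E₂ : Finset (Finset Lit)) (I₁ I₂ : PropForm)
    (hI₁l : ∀ v : Nat → Bool, (∀ C ∈ E₁, clauseSat v C) → I₁.eval v = true)
    (hI₁r : ∀ v : Nat → Bool, I₁.eval v = true →
      (∃ C ∈ Cs, cubeSat v C) ∨ (∃ C ∈ E₂, cubeSat v C))
    (hI₂l : ∀ v : Nat → Bool, (∀ C ∈ E₁, clauseSat v C) → I₂.eval v = true)
    (hI₂r : ∀ v : Nat → Bool, I₂.eval v = true →
      (∃ D ∈ Ds, cubeSat v D) ∨ (∃ C ∈ E₂, cubeSat v C)) :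
    (∀ v : Nat → Bool, (∀ C ∈ E₁, clauseSat v C) →
      (PropForm.conj I₁ I₂).eval v = true) ∧
    (∀ v : Nat → Bool, (PropForm.conj I₁ I₂).eval v = true →
      (∃ C ∈ Cs, cubeSat v (insert l.compl C)) ∨
      (∃ D ∈ Ds, cubeSat v (insert l D)) ∨
      (∃ C ∈ E₂, cubeSat v C)) := by
  refine ⟨fun v hE₁ => by simp [PropForm.eval, hI₁l v hE₁, hI₂l v hE₁], fun v hI => ?_⟩
  obtain ⟨h₁, h₂⟩ : I₁.eval v = true ∧ I₂.eval v = true := by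
    simpa only [PropForm.eval, Bool.and_eq_true] using hI
  -- `l` or `l*` holds under `v`: it selects which of `I₁`, `I₂` supplies the cube.
  cases hl : l.eval v
  · have hl' : l.compl.eval v = true := by simp [Lit.eval_compl, hl]
    rcases hI₁r v h₁ with hC | hE₂
    · exact Or.inl (exists_cubeSat_insert hl' hC)
    · exact Or.inr (Or.inr hE₂)
  · rcases hI₂r v h₂ with hD | hE₂
    · exact Or.inr (Or.inl (exists_cubeSat_insert hl hD))
    · exact Or.inr (Or.inr hE₂)

theorem stmt5 (l : Lit) (Cs Ds : List (Finset Lit))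
    (E₁ E₂ : Finset (Finset Lit)) (I₁ I₂ : PropForm)
    (hCs : ∀ C ∈ Cs, l ∉ C ∧ l.compl ∉ C)
    (hDs : ∀ D ∈ Ds, l ∉ D ∧ l.compl ∉ D)
    (hE₁ : ∀ C ∈ E₁, l ∉ C ∧ l.compl ∉ C)
    (hE₂ : ∀ C ∈ E₂, l ∉ C ∧ l.compl ∉ C)
    (hI₁l : ∀ v : Nat → Bool, (∀ C ∈ E₁, clauseSat v C) → I₁.eval v = true)
    (hI₁r : ∀ v : Nat → Bool, I₁.eval v = true →
      (∃ C ∈ Cs, cubeSat v C) ∨ (∃ C ∈ E₂, cubeSat v C))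
    (hI₂l : ∀ v : Nat → Bool, (∀ C ∈ E₁, clauseSat v C) → I₂.eval v = true)
    (hI₂r : ∀ v : Nat → Bool, I₂.eval v = true →
      (∃ D ∈ Ds, cubeSat v D) ∨ (∃ C ∈ E₂, cubeSat v C)) :
    (∀ v : Nat → Bool, (∀ C ∈ E₁, clauseSat v C) →
      (PropForm.conj I₁ I₂).eval v = true) ∧
    (∀ v : Nat → Bool, (PropForm.conj I₁ I₂).eval v = true →
      (∃ C ∈ Cs, cubeSat v (insert l.compl C)) ∨
      (∃ D ∈ Ds, cubeSat v (insert l D)) ∨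
      (∃ C ∈ E₂, cubeSat v C)) :=
  stmt5_general l Cs Ds E₁ E₂ I₁ I₂ hI₁l hI₁r hI₂l hI₂r
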